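/- (Sewing lemma with controls.) Let d ∈ ℕ and ε > 0. There exists a constant C = C(ε) > 0 such that the following holds for all 0 ≤ S ≤ T. Let A : Δ_{[S,T]} → ℝ^d, and let w be a control on Δ_{[S,T]} such that |δA_{s,u,t}| ≤ w(s,t)^{1+ε} for every (s,t) ∈ Δ_{[S,T]} and every u ∈ [s,t]. Suppose there exists a function 𝒜 : [S,T] → ℝ^d such that for every t ∈ [S,T] and every sequence of partitions Π_N = {S = t_0^N, …, t_{k(N)}^N = t} of [S,t] with mesh |Π_N| → 0, one has ∑_{i=0}^{k(N)−1} A_{t_i^N, t_{i+1}^N} → 𝒜_t − 𝒜_S as N → ∞. Then for every (s,t) ∈ Δ_{[S,T]} one has |𝒜_t − 𝒜_s| ≤ |A_{s,t}| + C · w(s,t)^{1+ε}. -/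

import Mathlib

/-!
Perturb the control to `v = w + K (t - s)`, which is strictly increasing, and bisect `[s, t]`
repeatedly at points halving `v` (intermediate value theorem). At level `n` each of the `2ⁿ`
intervals has `v ≤ v(s,t) / 2ⁿ`, so one more bisection changes the Riemann sum by at most
`2ⁿ (v(s,t) / 2ⁿ)^(1+ε) = 2^(-εn) v(s,t)^(1+ε)`; summing the geometric series bounds the distance
from `A s t` by `(1 - 2^(-ε))⁻¹ v(s,t)^(1+ε)`. The term `K (t - s)` forces the mesh to zero, so
(after prefixing partitions of `[S, s]`) these sums converge to `𝒜 t - 𝒜 s`. Finally let `K → 0`.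
-/

open Filter Topology Finset

structure IsControlOn (w : ℝ → ℝ → ℝ) (S T : ℝ) : Prop where
  continuousOn : ContinuousOn (fun p : ℝ × ℝ => w p.1 p.2) {p | S ≤ p.1 ∧ p.1 ≤ p.2 ∧ p.2 ≤ T}
  nonneg : ∀ s t, S ≤ s → s ≤ t → t ≤ T → 0 ≤ w s t
  diag : ∀ s, S ≤ s → s ≤ T → w s s = 0
  superadditive : ∀ s u t, S ≤ s → s ≤ u → u ≤ t → t ≤ T → w s u + w u t ≤ w s t

namespace IsControlOn

variable {w : ℝ → ℝ → ℝ} {S T : ℝ}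

theorem add_mul_sub (hw : IsControlOn w S T) {K : ℝ} (hK : 0 ≤ K) :
    IsControlOn (fun s t => w s t + K * (t - s)) S T where
  continuousOn := hw.continuousOn.add (by fun_prop)
  nonneg s t hs hst ht := add_nonneg (hw.nonneg s t hs hst ht) (mul_nonneg hK (sub_nonneg.2 hst))
  diag s hs hsT := by simp [hw.diag s hs hsT]
  superadditive s u t hs hsu hut ht := by linarith [hw.superadditive s u t hs hsu hut ht]

theorem exists_halving (hw : IsControlOn w S T) {a b : ℝ} (hSa : S ≤ a) (hab : a ≤ b)
    (hbT : b ≤ T) : ∃ u ∈ Set.Icc a b, w a u ≤ w a b / 2 ∧ w u b ≤ w a b / 2 := by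
  have hcont : ContinuousOn (fun u => w a u - w u b) (Set.Icc a b) := by
    refine (hw.continuousOn.comp (continuous_const.prodMk continuous_id).continuousOn ?_).sub
      (hw.continuousOn.comp (continuous_id.prodMk continuous_const).continuousOn ?_)
    · exact fun u hu => ⟨hSa, hu.1, hu.2.trans hbT⟩
    · exact fun u hu => ⟨hSa.trans hu.1, hu.2, hbT⟩
  have hzero : (0 : ℝ) ∈ Set.Icc (w a a - w a b) (w a b - w b b) := by
    rw [hw.diag a hSa (hab.trans hbT), hw.diag b (hSa.trans hab) hbT]
    have := hw.nonneg a b hSa hab hbT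
    constructor <;> linarith
  obtain ⟨u, hu, hequal⟩ := intermediate_value_Icc hab hcont hzero
  have := hw.superadditive a u b hSa hu.1 hu.2 hbT
  exact ⟨u, hu, by linarith, by linarith⟩

end IsControlOn

open Classical in
noncomputable def halvingPoint (w : ℝ → ℝ → ℝ) (a b : ℝ) : ℝ :=
  if h : ∃ u ∈ Set.Icc a b, w a u ≤ w a b / 2 ∧ w u b ≤ w a b / 2 then h.choose else a

theorem IsControlOn.halvingPoint_spec {w : ℝ → ℝ → ℝ} {S T a b : ℝ} (hw : IsControlOn w S T)
    (hSa : S ≤ a) (hab : a ≤ b) (hbT : b ≤ T) :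
    halvingPoint w a b ∈ Set.Icc a b ∧ w a (halvingPoint w a b) ≤ w a b / 2 ∧
      w (halvingPoint w a b) b ≤ w a b / 2 := by
  have h := hw.exists_halving hSa hab hbT
  rw [halvingPoint, dif_pos h]
  exact h.choose_spec

noncomputable def bisect (w : ℝ → ℝ → ℝ) (π : ℕ → ℝ) (i : ℕ) : ℝ :=
  if i % 2 = 0 then π (i / 2) else halvingPoint w (π (i / 2)) (π (i / 2 + 1))

theorem bisect_two_mul (w : ℝ → ℝ → ℝ) (π : ℕ → ℝ) (j : ℕ) : bisect w π (2 * j) = π j := by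
  simp [bisect]

theorem bisect_two_mul_add_one (w : ℝ → ℝ → ℝ) (π : ℕ → ℝ) (j : ℕ) :
    bisect w π (2 * j + 1) = halvingPoint w (π j) (π (j + 1)) := by
  simp [bisect, Nat.add_mod, Nat.add_div]

noncomputable def dyadicPartition (w : ℝ → ℝ → ℝ) (a b : ℝ) : ℕ → ℕ → ℝ
  | 0 => fun i => if i = 0 then a else b
  | n + 1 => bisect w (dyadicPartition w a b n)

structure IsDyadicPartition (w : ℝ → ℝ → ℝ) (a b : ℝ) (n : ℕ) (π : ℕ → ℝ) : Prop where
  zero : π 0 = a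
  eq_of_le : ∀ i, 2 ^ n ≤ i → π i = b
  le_succ : ∀ i, π i ≤ π (i + 1)
  le_div : ∀ i, w (π i) (π (i + 1)) ≤ w a b / 2 ^ n

namespace IsDyadicPartition

variable {w : ℝ → ℝ → ℝ} {S T a b : ℝ} {n : ℕ} {π : ℕ → ℝ}

theorem mem_Icc (hπ : IsDyadicPartition w a b n π) (i : ℕ) : π i ∈ Set.Icc a b := by
  have hmono := monotone_nat_of_le_succ hπ.le_succ
  refine ⟨hπ.zero ▸ hmono (Nat.zero_le i), ?_⟩
  rw [← hπ.eq_of_le (max i (2 ^ n)) (le_max_right _ _)]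
  exact hmono (le_max_left _ _)

theorem left_le_right (hπ : IsDyadicPartition w a b n π) : a ≤ b :=
  (hπ.mem_Icc 0).1.trans (hπ.mem_Icc 0).2

theorem halvingPoint_spec (hw : IsControlOn w S T) (hπ : IsDyadicPartition w a b n π)
    (hSa : S ≤ a) (hbT : b ≤ T) (j : ℕ) :
    halvingPoint w (π j) (π (j + 1)) ∈ Set.Icc (π j) (π (j + 1)) ∧
      w (π j) (halvingPoint w (π j) (π (j + 1))) ≤ w (π j) (π (j + 1)) / 2 ∧
      w (halvingPoint w (π j) (π (j + 1))) (π (j + 1)) ≤ w (π j) (π (j + 1)) / 2 :=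
  hw.halvingPoint_spec (hSa.trans (hπ.mem_Icc j).1) (hπ.le_succ j) ((hπ.mem_Icc _).2.trans hbT)

theorem bisect (hw : IsControlOn w S T) (hπ : IsDyadicPartition w a b n π) (hSa : S ≤ a)
    (hbT : b ≤ T) : IsDyadicPartition w a b (n + 1) (bisect w π) where
  zero := by simpa using bisect_two_mul w π 0 ▸ hπ.zero
  eq_of_le i hi := by
    rw [pow_succ] at hi
    obtain ⟨j, rfl | rfl⟩ := Nat.even_or_odd' i
    · exact (bisect_two_mul w π j).trans (hπ.eq_of_le j (by omega))
    · have hm := (halvingPoint_spec hw hπ hSa hbT j).1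
      rw [bisect_two_mul_add_one]
      rw [hπ.eq_of_le j (by omega), hπ.eq_of_le (j + 1) (by omega)] at hm ⊢
      simpa using hm
  le_succ i := by
    obtain ⟨j, rfl | rfl⟩ := Nat.even_or_odd' i
    · rw [bisect_two_mul, bisect_two_mul_add_one]
      exact (halvingPoint_spec hw hπ hSa hbT j).1.1
    · rw [bisect_two_mul_add_one, show 2 * j + 1 + 1 = 2 * (j + 1) by ring, bisect_two_mul]
      exact (halvingPoint_spec hw hπ hSa hbT j).1.2
  le_div i := by
    obtain ⟨j, hj⟩ := Nat.even_or_odd' i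
    have half_le : ∀ x, x ≤ w (π j) (π (j + 1)) / 2 → x ≤ w a b / 2 ^ (n + 1) := by
      intro x hx
      rw [pow_succ, ← div_div]
      linarith [hπ.le_div j]
    obtain ⟨-, hleft, hright⟩ := halvingPoint_spec hw hπ hSa hbT j
    rcases hj with rfl | rfl
    · rw [bisect_two_mul, bisect_two_mul_add_one]
      exact half_le _ hleft
    · rw [bisect_two_mul_add_one, show 2 * j + 1 + 1 = 2 * (j + 1) by ring, bisect_two_mul]
      exact half_le _ hright

end IsDyadicPartition

theorem IsControlOn.isDyadicPartition {w : ℝ → ℝ → ℝ} {S T a b : ℝ} (hw : IsControlOn w S T)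
    (hSa : S ≤ a) (hab : a ≤ b) (hbT : b ≤ T) (n : ℕ) :
    IsDyadicPartition w a b n (dyadicPartition w a b n) := by
  induction n with
  | zero =>
    refine ⟨rfl, fun i hi => if_neg (by omega), fun i => ?_, fun i => ?_⟩ <;>
      rcases i with _ | i <;>
      simp [dyadicPartition, hab, hw.diag b (hSa.trans hab) hbT, hw.nonneg a b hSa hab hbT]
  | succ n ih => exact ih.bisect hw hSa hbT

def riemannSum {E : Type*} [AddCommMonoid E] (A : ℝ → ℝ → E) (π : ℕ → ℝ) (k : ℕ) : E :=
  ∑ i ∈ range k, A (π i) (π (i + 1))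

theorem sum_range_two_mul {M : Type*} [AddCommMonoid M] (f : ℕ → M) (k : ℕ) :
    ∑ i ∈ range (2 * k), f i = ∑ j ∈ range k, (f (2 * j) + f (2 * j + 1)) := by
  induction k with
  | zero => simp
  | succ k ih =>
    rw [mul_add, mul_one, sum_range_succ, sum_range_succ, sum_range_succ, ih, add_assoc]

theorem riemannSum_bisect {E : Type*} [AddCommMonoid E] (A : ℝ → ℝ → E) (w : ℝ → ℝ → ℝ)
    (π : ℕ → ℝ) (k : ℕ) :
    riemannSum A (bisect w π) (2 * k) = ∑ j ∈ range k,
      (A (π j) (halvingPoint w (π j) (π (j + 1))) +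
        A (halvingPoint w (π j) (π (j + 1))) (π (j + 1))) := by
  rw [riemannSum, sum_range_two_mul]
  refine sum_congr rfl fun j _ => ?_
  rw [show 2 * j + 1 + 1 = 2 * (j + 1) by ring, bisect_two_mul, bisect_two_mul,
    bisect_two_mul_add_one]

theorem two_pow_mul_rpow_div_two_pow {V : ℝ} (hV : 0 ≤ V) (ε : ℝ) (n : ℕ) :
    (2 : ℝ) ^ n * (V / 2 ^ n) ^ (1 + ε) = ((2 : ℝ) ^ (-ε)) ^ n * V ^ (1 + ε) := by
  have h2n : (0 : ℝ) < 2 ^ n := by positivity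
  rw [Real.div_rpow hV h2n.le, Real.rpow_add h2n, Real.rpow_one, Real.rpow_neg zero_le_two,
    inv_pow, Real.rpow_pow_comm zero_le_two]
  field_simp

structure IsFinePartitionSeq (a b : ℝ) (k : ℕ → ℕ) (π : ℕ → ℕ → ℝ) : Prop where
  zero : ∀ N, π N 0 = a
  last : ∀ N, π N (k N) = b
  le_succ : ∀ N i, i < k N → π N i ≤ π N (i + 1)
  mesh : ∀ δ : ℝ, 0 < δ → ∃ N₀, ∀ N ≥ N₀, ∀ i < k N, π N (i + 1) - π N i ≤ δ

def appendPartition (p : ℕ → ℝ) (m : ℕ) (q : ℕ → ℝ) (i : ℕ) : ℝ :=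
  if i ≤ m then p i else q (i - m)

section appendPartition

variable {p q : ℕ → ℝ} {m : ℕ}

theorem appendPartition_of_le {i : ℕ} (hi : i ≤ m) : appendPartition p m q i = p i :=
  if_pos hi

theorem appendPartition_add (h : p m = q 0) (j : ℕ) : appendPartition p m q (m + j) = q j := by
  rcases j with _ | j
  · simpa [appendPartition] using h
  · simp [appendPartition]

theorem riemannSum_appendPartition {E : Type*} [AddCommMonoid E] (A : ℝ → ℝ → E)
    (h : p m = q 0) (l : ℕ) :
    riemannSum A (appendPartition p m q) (m + l) = riemannSum A p m + riemannSum A q l := by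
  rw [riemannSum, sum_range_add]
  congr 1
  · refine sum_congr rfl fun i hi => ?_
    have hi := mem_range.1 hi
    rw [appendPartition_of_le hi.le, appendPartition_of_le hi]
  · refine sum_congr rfl fun j _ => ?_
    rw [add_assoc, appendPartition_add h, appendPartition_add h]

theorem forall_step_appendPartition (P : ℝ → ℝ → Prop) (h : p m = q 0) {l : ℕ}
    (hp : ∀ i < m, P (p i) (p (i + 1))) (hq : ∀ j < l, P (q j) (q (j + 1))) :
    ∀ i < m + l, P (appendPartition p m q i) (appendPartition p m q (i + 1)) := by
  intro i hi
  rcases lt_or_ge i m with him | hmi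
  · rw [appendPartition_of_le him.le, appendPartition_of_le him]
    exact hp i him
  · obtain ⟨j, rfl⟩ := Nat.exists_eq_add_of_le hmi
    rw [add_assoc, appendPartition_add h, appendPartition_add h]
    exact hq j (by omega)

end appendPartition

theorem IsFinePartitionSeq.append {a b c : ℝ} {k l : ℕ → ℕ} {π ρ : ℕ → ℕ → ℝ}
    (hπ : IsFinePartitionSeq a b k π) (hρ : IsFinePartitionSeq b c l ρ) :
    IsFinePartitionSeq a c (fun N => k N + l N) (fun N => appendPartition (π N) (k N) (ρ N)) := by
  have hjoin : ∀ N, π N (k N) = ρ N 0 := fun N => (hπ.last N).trans (hρ.zero N).symm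
  refine ⟨fun N => ?_, fun N => ?_, fun N => ?_, fun δ hδ => ?_⟩
  · rw [appendPartition_of_le (Nat.zero_le _), hπ.zero]
  · rw [appendPartition_add (hjoin N), hρ.last]
  · exact forall_step_appendPartition (· ≤ ·) (hjoin N) (hπ.le_succ N) (hρ.le_succ N)
  · obtain ⟨N₁, hN₁⟩ := hπ.mesh δ hδ
    obtain ⟨N₂, hN₂⟩ := hρ.mesh δ hδ
    refine ⟨max N₁ N₂, fun N hN => ?_⟩
    exact forall_step_appendPartition (fun x y => y - x ≤ δ) (hjoin N)
      (hN₁ N (le_of_max_le_left hN)) (hN₂ N (le_of_max_le_right hN))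

section Sewing

variable {E : Type*} [SeminormedAddCommGroup E] {A : ℝ → ℝ → E} {𝒜 : ℝ → E}
  {w : ℝ → ℝ → ℝ} {S T ε K a b s t : ℝ}

theorem norm_riemannSum_bisect_sub_le (hε : 0 < ε) (hw : IsControlOn w S T)
    (hA : ∀ s u t, S ≤ s → s ≤ u → u ≤ t → t ≤ T → ‖A s t - A s u - A u t‖ ≤ w s t ^ (1 + ε))
    {n : ℕ} {π : ℕ → ℝ} (hπ : IsDyadicPartition w a b n π) (hSa : S ≤ a) (hbT : b ≤ T) :
    ‖riemannSum A (bisect w π) (2 ^ (n + 1)) - riemannSum A π (2 ^ n)‖ ≤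
      ((2 : ℝ) ^ (-ε)) ^ n * w a b ^ (1 + ε) := by
  have hterm : ∀ j, ‖A (π j) (halvingPoint w (π j) (π (j + 1))) +
      A (halvingPoint w (π j) (π (j + 1))) (π (j + 1)) - A (π j) (π (j + 1))‖ ≤
      (w a b / 2 ^ n) ^ (1 + ε) := by
    intro j
    have hj := hπ.mem_Icc j
    have hj' := hπ.mem_Icc (j + 1)
    obtain ⟨hm, -, -⟩ := hπ.halvingPoint_spec hw hSa hbT j
    rw [norm_sub_rev, ← sub_sub]
    refine (hA _ _ _ (hSa.trans hj.1) hm.1 hm.2 (hj'.2.trans hbT)).trans ?_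
    exact Real.rpow_le_rpow (hw.nonneg _ _ (hSa.trans hj.1) (hπ.le_succ j) (hj'.2.trans hbT))
        (hπ.le_div j) (by linarith)
  rw [pow_succ', riemannSum_bisect, riemannSum, ← sum_sub_distrib]
  calc _ ≤ ∑ j ∈ range (2 ^ n), (w a b / 2 ^ n) ^ (1 + ε) :=
        (norm_sum_le _ _).trans (sum_le_sum fun j _ => hterm j)
    _ = _ := by
      rw [sum_const, card_range, nsmul_eq_mul, Nat.cast_pow, Nat.cast_ofNat,
        two_pow_mul_rpow_div_two_pow (hw.nonneg a b hSa hπ.left_le_right hbT)]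

theorem IsControlOn.norm_riemannSum_dyadicPartition_sub_le (hε : 0 < ε) (hw : IsControlOn w S T)
    (hA : ∀ s u t, S ≤ s → s ≤ u → u ≤ t → t ≤ T → ‖A s t - A s u - A u t‖ ≤ w s t ^ (1 + ε))
    (hSa : S ≤ a) (hab : a ≤ b) (hbT : b ≤ T) (n : ℕ) :
    ‖riemannSum A (dyadicPartition w a b n) (2 ^ n) - A a b‖ ≤
      (1 - (2 : ℝ) ^ (-ε))⁻¹ * w a b ^ (1 + ε) := by
  set r : ℝ := 2 ^ (-ε)
  have hr1 : r < 1 := Real.rpow_lt_one_of_one_lt_of_neg one_lt_two (by linarith)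
  set R : ℕ → E := fun m => riemannSum A (dyadicPartition w a b m) (2 ^ m)
  have hR0 : R 0 = A a b := by simp [R, riemannSum, dyadicPartition]
  calc ‖R n - A a b‖ = dist (R 0) (R n) := by rw [hR0, dist_comm, dist_eq_norm]
    _ ≤ ∑ m ∈ range n, dist (R m) (R (m + 1)) := dist_le_range_sum_dist R n
    _ ≤ ∑ m ∈ range n, r ^ m * w a b ^ (1 + ε) := by
      refine sum_le_sum fun m _ => ?_
      rw [dist_comm, dist_eq_norm]
      exact norm_riemannSum_bisect_sub_le hε hw hA (hw.isDyadicPartition hSa hab hbT m) hSa hbT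
    _ = (∑ m ∈ range n, r ^ m) * w a b ^ (1 + ε) := (sum_mul ..).symm
    _ ≤ (1 - r)⁻¹ * w a b ^ (1 + ε) := by
      gcongr
      · exact Real.rpow_nonneg (hw.nonneg a b hSa hab hbT) _
      · simpa using geom_sum_Ico_le_of_lt_one (m := 0) (n := n) (by positivity) hr1

theorem IsControlOn.isFinePartitionSeq_dyadicPartition (hw : IsControlOn w S T) (hK : 0 < K)
    (hlen : ∀ x y, S ≤ x → x ≤ y → y ≤ T → K * (y - x) ≤ w x y)
    (hSa : S ≤ a) (hab : a ≤ b) (hbT : b ≤ T) :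
    IsFinePartitionSeq a b (2 ^ ·) (dyadicPartition w a b) := by
  have hπ := hw.isDyadicPartition hSa hab hbT
  refine ⟨fun N => (hπ N).zero, fun N => (hπ N).eq_of_le _ le_rfl,
    fun N i _ => (hπ N).le_succ i, fun δ hδ => ?_⟩
  have hlim : Tendsto (fun N : ℕ => w a b / 2 ^ N / K) atTop (𝓝 0) := by
    simpa [div_eq_mul_inv] using ((tendsto_pow_atTop_nhds_zero_of_lt_one
      (by norm_num : (0 : ℝ) ≤ 1 / 2) (by norm_num)).const_mul (w a b)).div_const K
  obtain ⟨N₀, hN₀⟩ := eventually_atTop.1 (hlim.eventually (eventually_le_nhds hδ))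
  refine ⟨N₀, fun N hN i _ => ?_⟩
  have hi := (hπ N).mem_Icc i
  have hi' := (hπ N).mem_Icc (i + 1)
  have hstep := hlen _ _ (hSa.trans hi.1) ((hπ N).le_succ i) (hi'.2.trans hbT)
  refine le_trans ?_ (hN₀ N hN)
  rw [le_div_iff₀ hK, mul_comm]
  exact hstep.trans ((hπ N).le_div i)

theorem IsControlOn.tendsto_riemannSum_dyadicPartition (hw : IsControlOn w S T) (hK : 0 < K)
    (hlen : ∀ x y, S ≤ x → x ≤ y → y ≤ T → K * (y - x) ≤ w x y)
    (h𝒜 : ∀ t, S ≤ t → t ≤ T → ∀ k π, IsFinePartitionSeq S t k π →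
      Tendsto (fun N => riemannSum A (π N) (k N)) atTop (𝓝 (𝒜 t - 𝒜 S)))
    (hSs : S ≤ s) (hst : s ≤ t) (htT : t ≤ T) :
    Tendsto (fun N => riemannSum A (dyadicPartition w s t N) (2 ^ N)) atTop (𝓝 (𝒜 t - 𝒜 s)) := by
  have hSs' := hw.isFinePartitionSeq_dyadicPartition hK hlen le_rfl hSs (hst.trans htT)
  have hst' := hw.isFinePartitionSeq_dyadicPartition hK hlen hSs hst htT
  have hdiff := (h𝒜 t (hSs.trans hst) htT _ _ (hSs'.append hst')).sub
    (h𝒜 s hSs (hst.trans htT) _ _ hSs')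
  rw [sub_sub_sub_cancel_right] at hdiff
  refine hdiff.congr fun N => ?_
  rw [riemannSum_appendPartition A ((hSs'.last N).trans (hst'.zero N).symm), add_sub_cancel_left]

theorem IsControlOn.norm_sub_sub_le (hε : 0 < ε) (hw : IsControlOn w S T) (hK : 0 < K)
    (hlen : ∀ x y, S ≤ x → x ≤ y → y ≤ T → K * (y - x) ≤ w x y)
    (hA : ∀ s u t, S ≤ s → s ≤ u → u ≤ t → t ≤ T → ‖A s t - A s u - A u t‖ ≤ w s t ^ (1 + ε))
    (h𝒜 : ∀ t, S ≤ t → t ≤ T → ∀ k π, IsFinePartitionSeq S t k π →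
      Tendsto (fun N => riemannSum A (π N) (k N)) atTop (𝓝 (𝒜 t - 𝒜 S)))
    (hSs : S ≤ s) (hst : s ≤ t) (htT : t ≤ T) :
    ‖𝒜 t - 𝒜 s - A s t‖ ≤ (1 - (2 : ℝ) ^ (-ε))⁻¹ * w s t ^ (1 + ε) :=
  le_of_tendsto' ((hw.tendsto_riemannSum_dyadicPartition hK hlen h𝒜 hSs hst htT).sub_const _).norm
    fun N => hw.norm_riemannSum_dyadicPartition_sub_le hε hA hSs hst htT N

end Sewing

theorem sewing_lemma_with_controls (d : ℕ) (ε : ℝ) (hε : 0 < ε) :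
    ∃ C : ℝ, 0 < C ∧
      ∀ (S T : ℝ), 0 ≤ S → S ≤ T →
      ∀ (A : ℝ → ℝ → EuclideanSpace ℝ (Fin d)) (w : ℝ → ℝ → ℝ)
        (𝒜 : ℝ → EuclideanSpace ℝ (Fin d)),
        -- `w` is a control on the simplex Δ_{[S,T]}
        ContinuousOn (fun p : ℝ × ℝ => w p.1 p.2)
          {p : ℝ × ℝ | S ≤ p.1 ∧ p.1 ≤ p.2 ∧ p.2 ≤ T} →
        (∀ s t, S ≤ s → s ≤ t → t ≤ T → 0 ≤ w s t) →
        (∀ s, S ≤ s → s ≤ T → w s s = 0) →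
        (∀ s u t, S ≤ s → s ≤ u → u ≤ t → t ≤ T → w s u + w u t ≤ w s t) →
        -- bound on δA_{s,u,t} = A_{s,t} - A_{s,u} - A_{u,t}
        (∀ s u t, S ≤ s → s ≤ u → u ≤ t → t ≤ T →
          ‖A s t - A s u - A u t‖ ≤ w s t ^ (1 + ε)) →
        -- Riemann sums along any sequence of partitions of [S,t] with vanishing mesh
        -- converge to 𝒜_t - 𝒜_S
        (∀ t, S ≤ t → t ≤ T →
          ∀ (k : ℕ → ℕ) (π : ℕ → ℕ → ℝ),
            (∀ N, π N 0 = S) → (∀ N, π N (k N) = t) →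
            (∀ N i, i < k N → π N i ≤ π N (i + 1)) →
            (∀ δ : ℝ, 0 < δ → ∃ N₀, ∀ N ≥ N₀, ∀ i < k N, π N (i + 1) - π N i ≤ δ) →
            Tendsto (fun N => ∑ i ∈ Finset.range (k N), A (π N i) (π N (i + 1)))
              atTop (𝓝 (𝒜 t - 𝒜 S))) →
        -- conclusion
        ∀ s t, S ≤ s → s ≤ t → t ≤ T →
          ‖𝒜 t - 𝒜 s‖ ≤ ‖A s t‖ + C * w s t ^ (1 + ε) := by
  set C : ℝ := (1 - (2 : ℝ) ^ (-ε))⁻¹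
  refine ⟨C, inv_pos.2 (sub_pos.2 (Real.rpow_lt_one_of_one_lt_of_neg one_lt_two (by linarith))), ?_⟩
  intro S T _ _ A w 𝒜 hwc hwnn hw0 hwsup hA h𝒜 s t hSs hst htT
  have hw : IsControlOn w S T := ⟨hwc, hwnn, hw0, hwsup⟩
  have hperturbed : ∀ K > 0, ‖𝒜 t - 𝒜 s - A s t‖ ≤ C * (w s t + K * (t - s)) ^ (1 + ε) := by
    intro K hK
    refine (hw.add_mul_sub hK.le).norm_sub_sub_le hε hK (fun x y hx hxy hy => ?_)
      (fun x u y hx hxu huy hy => ?_) (fun t hSt htT k π hπ => h𝒜 t hSt htT k π hπ.zero hπ.last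
        hπ.le_succ hπ.mesh) hSs hst htT
    · linarith [hwnn x y hx hxy hy]
    · exact (hA x u y hx hxu huy hy).trans (Real.rpow_le_rpow (hwnn x y hx (hxu.trans huy) hy)
        (le_add_of_nonneg_right (mul_nonneg hK.le (by linarith))) (by linarith))
  have hlim : Tendsto (fun K => C * (w s t + K * (t - s)) ^ (1 + ε)) (𝓝[>] 0)
      (𝓝 (C * w s t ^ (1 + ε))) := by
    have hcont : Continuous (fun K => C * (w s t + K * (t - s)) ^ (1 + ε)) :=
      continuous_const.mul ((by fun_prop : Continuous fun K : ℝ => w s t + K * (t - s)).rpow_const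
        fun _ => Or.inr (by linarith))
    simpa using (hcont.tendsto 0).mono_left nhdsWithin_le_nhds
  have hmain := ge_of_tendsto hlim (eventually_nhdsWithin_of_forall hperturbed)
  linarith [norm_le_insert' (𝒜 t - 𝒜 s) (A s t)]
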